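/- arXiv:math/9809046 — 3 statements merged into one kernel-verified Lean document; each statement's English description precedes it below -/
import Mathlib

section
/- Let n = 1 and let ψ ∈ L¹(ℝ). If ∫_ℝ |ψ(x)| log(2+|x|) dx < ∞ and ∫_ℝ |ψ(x)| log(2+|ψ(x)|) dx < ∞, then L(ψ) = sup_{|ξ|=1} ∬_{ℝ×ℝ} |ψ(x)ψ(y)| |log|ξ(x−y)|| dx dy < ∞. -/
open MeasureTheory Set NNReal ENNReal RealInnerProductSpace

noncomputable section

/-- `ℝⁿ` with the Euclidean norm. -/
abbrev Euc (n : ℕ) := EuclideanSpace ℝ (Fin n)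

namespace RemarkAux

/-- Singular kernel `|s|^{-1/2}` truncated to `|s| < 1`. -/
def K (s : ℝ) : ℝ := if |s| < 1 then (Real.sqrt |s|)⁻¹ else 0

lemma K_nonneg (s : ℝ) : 0 ≤ K s := by
  unfold K
  split
  · positivity
  · exact le_refl 0

lemma K_even (s : ℝ) : K (-s) = K s := by
  unfold K; rw [abs_neg]

lemma K_measurable : Measurable K := by
  have h1 : MeasurableSet {s : ℝ | |s| < 1} := by
    have : {s : ℝ | |s| < 1} = Ioo (-1) 1 := by ext s; simp [abs_lt]
    rw [this]; exact measurableSet_Ioo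
  exact Measurable.ite h1
    ((Real.continuous_sqrt.measurable.comp measurable_abs).inv) measurable_const

lemma K_integrable : Integrable K := by
  have hind : K = Set.indicator (Ioo (-1) 1) (fun s => (Real.sqrt |s|)⁻¹) := by
    funext s
    unfold K
    rw [Set.indicator_apply]
    by_cases h : |s| < 1
    · rw [if_pos h, if_pos (by rwa [mem_Ioo, ← abs_lt])]
    · rw [if_neg h, if_neg (by rwa [mem_Ioo, ← abs_lt])]
  rw [hind, integrable_indicator_iff measurableSet_Ioo]
  have hpos : IntegrableOn (fun s : ℝ => (Real.sqrt |s|)⁻¹) (Ioo 0 1) := by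
    refine (((intervalIntegral.integrableOn_Ioo_rpow_iff one_pos).2
      (by norm_num : (-1 : ℝ) < -(2⁻¹))).congr_fun (fun s hs => ?_) measurableSet_Ioo)
    rw [abs_of_pos hs.1, Real.sqrt_eq_rpow, ← Real.rpow_neg hs.1.le]
    norm_num
  have hneg : IntegrableOn (fun s : ℝ => (Real.sqrt |s|)⁻¹) (Ioo (-1) 0) := by
    rw [← (Measure.measurePreserving_neg (volume : Measure ℝ)).integrableOn_comp_preimage
        (Homeomorph.neg ℝ).measurableEmbedding]
    simp only [Function.comp_def, abs_neg, neg_preimage, neg_Ioo, neg_neg, neg_zero]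
    exact hpos
  have hzero : IntegrableOn (fun s : ℝ => (Real.sqrt |s|)⁻¹) {(0 : ℝ)} := by
    rw [IntegrableOn, Measure.restrict_eq_zero.mpr (measure_singleton 0)]
    exact integrable_zero_measure
  have hsub : Ioo (-1 : ℝ) 1 ⊆ Ioo (-1) 0 ∪ ({0} ∪ Ioo 0 1) := by
    intro s hs
    rcases lt_trichotomy s 0 with h | h | h
    · exact Or.inl ⟨hs.1, h⟩
    · exact Or.inr (Or.inl (by simp [h]))
    · exact Or.inr (Or.inr ⟨h, hs.2⟩)
  exact ((hneg.union (hzero.union hpos)).mono_set hsub)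

lemma log_two_add_nonneg {a : ℝ} (ha : 0 ≤ a) : 0 ≤ Real.log (2 + a) :=
  Real.log_nonneg (by linarith)

/-- The key pointwise inequality. -/
lemma key (a b x y : ℝ) (ha : 0 ≤ a) (hb : 0 ≤ b) :
    a * b * |Real.log (|x - y|)| ≤
      a * Real.log (2 + |x|) * b + a * (b * Real.log (2 + |y|))
      + 2 * (a * Real.log (2 + a) * b + a * (b * Real.log (2 + b)))
      + (2 * a * K (x - y) + 2 * b * K (x - y)) := by
  have hLx : 0 ≤ Real.log (2 + |x|) := log_two_add_nonneg (abs_nonneg x)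
  have hLy : 0 ≤ Real.log (2 + |y|) := log_two_add_nonneg (abs_nonneg y)
  have hLa : 0 ≤ Real.log (2 + a) := log_two_add_nonneg ha
  have hLb : 0 ≤ Real.log (2 + b) := log_two_add_nonneg hb
  have hK : 0 ≤ K (x - y) := K_nonneg _
  have t1 : 0 ≤ a * Real.log (2 + |x|) * b := by positivity
  have t2 : 0 ≤ a * (b * Real.log (2 + |y|)) := by positivity
  have t3 : 0 ≤ 2 * (a * Real.log (2 + a) * b + a * (b * Real.log (2 + b))) := by positivity
  have t5 : 0 ≤ 2 * a * K (x - y) := by positivity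
  have t6 : 0 ≤ 2 * b * K (x - y) := by positivity
  set t := |x - y| with htdef
  have ht : 0 ≤ t := abs_nonneg _
  rcases le_or_gt 1 t with h1 | h1
  · -- case `t ≥ 1`
    have hlog : |Real.log t| = Real.log t :=
      abs_of_nonneg (Real.log_nonneg h1)
    have htle : t ≤ (2 + |x|) * (2 + |y|) := by
      have h := abs_sub x y
      nlinarith [abs_nonneg x, abs_nonneg y]
    have hlt : Real.log t ≤ Real.log (2 + |x|) + Real.log (2 + |y|) := by
      have := Real.log_le_log (by linarith) htle
      rwa [Real.log_mul (by positivity) (by positivity)] at this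
    have hmain : a * b * Real.log t ≤
        a * Real.log (2 + |x|) * b + a * (b * Real.log (2 + |y|)) := by
      nlinarith [mul_le_mul_of_nonneg_left hlt (mul_nonneg ha hb)]
    rw [hlog]
    linarith
  · -- case `t < 1`
    have hKt : K (x - y) = (Real.sqrt t)⁻¹ := if_pos h1
    rcases eq_or_lt_of_le ht with h0 | h0
    · rw [← h0, Real.log_zero, abs_zero, mul_zero]
      linarith
    · have hlog : |Real.log t| = -Real.log t :=
        abs_of_nonpos (Real.log_nonpos ht h1.le)
      set s := (Real.sqrt t)⁻¹ with hsdef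
      have hst : 0 < Real.sqrt t := Real.sqrt_pos.2 h0
      have hs0 : 0 < s := by positivity
      have hs1 : 1 ≤ s := by
        rw [hsdef, one_le_inv_iff₀]
        exact ⟨hst, Real.sqrt_le_one.mpr h1.le⟩
      have hlogs : Real.log s = -(Real.log t / 2) := by
        rw [hsdef, Real.log_inv, Real.log_sqrt ht]
      rw [hlog]
      rcases le_or_gt (a * b) s with hab | hab
      · -- small case: `a b ≤ t^{-1/2}`
        set q := (Real.sqrt (Real.sqrt t))⁻¹ with hqdef
        have hsst : 0 < Real.sqrt (Real.sqrt t) := Real.sqrt_pos.2 hst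
        have hq0 : 0 < q := by positivity
        have hqq : q * q = s := by
          rw [hqdef, hsdef, ← mul_inv]
          rw [Real.mul_self_sqrt hst.le]
        have hlogq : Real.log q = -(Real.log t / 4) := by
          rw [hqdef, Real.log_inv, Real.log_sqrt hst.le, Real.log_sqrt ht]
          ring
        have h4 : -Real.log t ≤ 4 * q := by
          have hle := Real.log_le_sub_one_of_pos hq0
          rw [hlogq] at hle
          linarith
        set r := Real.sqrt (a * b) with hrdef
        have hr0 : 0 ≤ r := Real.sqrt_nonneg _
        have hrr : r * r = a * b := Real.mul_self_sqrt (mul_nonneg ha hb)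
        have hrq : r ≤ q := by
          rw [hrdef]
          calc Real.sqrt (a * b) ≤ Real.sqrt s := Real.sqrt_le_sqrt hab
            _ = q := by rw [← hqq, Real.sqrt_mul_self hq0.le]
        have hrab : r ≤ (a + b) / 2 := by
          rw [hrdef, Real.sqrt_mul ha]
          nlinarith [sq_nonneg (Real.sqrt a - Real.sqrt b), Real.sq_sqrt ha, Real.sq_sqrt hb]
        have hmain : a * b * (-Real.log t) ≤ 2 * a * s + 2 * b * s := by
          calc a * b * (-Real.log t) ≤ a * b * (4 * q) :=
                mul_le_mul_of_nonneg_left h4 (mul_nonneg ha hb)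
            _ = 4 * (r * r) * q := by rw [hrr]; ring
            _ ≤ 4 * (r * q) * q := by
                linarith [mul_le_mul_of_nonneg_right
                  (mul_le_mul_of_nonneg_left hrq hr0) hq0.le]
            _ = 4 * r * s := by rw [← hqq]; ring
            _ ≤ 4 * ((a + b) / 2) * s := by
                linarith [mul_le_mul_of_nonneg_right hrab hs0.le]
            _ = 2 * a * s + 2 * b * s := by ring
        rw [hKt]
        linarith
      · -- large case : `a b > t^{-1/2}`
        have hab1 : 1 < a * b := lt_of_le_of_lt hs1 hab
        have ha' : 0 < a := by nlinarith
        have hb' : 0 < b := by nlinarith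
        have hls : Real.log s ≤ Real.log (a * b) := Real.log_le_log hs0 hab.le
        have hlab : Real.log (a * b) = Real.log a + Real.log b :=
          Real.log_mul ha'.ne' hb'.ne'
        have hla : Real.log a ≤ Real.log (2 + a) := Real.log_le_log ha' (by linarith)
        have hlb : Real.log b ≤ Real.log (2 + b) := Real.log_le_log hb' (by linarith)
        have hlt : -Real.log t ≤ 2 * (Real.log (2 + a) + Real.log (2 + b)) := by
          have : -Real.log t = 2 * Real.log s := by rw [hlogs]; ring
          rw [this]
          linarith
        have hmain : a * b * (-Real.log t) ≤
            2 * (a * Real.log (2 + a) * b + a * (b * Real.log (2 + b))) := by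
          linarith [mul_le_mul_of_nonneg_left hlt (mul_nonneg ha hb)]
        linarith

end RemarkAux

/-- **Remark after Proposition 3** (one-dimensional case). If `ψ ∈ L¹(ℝ)` satisfies
`∫ |ψ(x)| log(2+|x|) dx < ∞` and `∫ |ψ(x)| log(2+|ψ(x)|) dx < ∞`, then
`L(ψ) = sup_{|ξ|=1} ∬ |ψ(x)ψ(y)| |log|ξ(x-y)|| dx dy < ∞`. -/
theorem remark_L_finite (ψ : ℝ → ℝ) (hψ : Integrable ψ)
    (h1 : Integrable fun x : ℝ => |ψ x| * Real.log (2 + |x|))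
    (h2 : Integrable fun x : ℝ => |ψ x| * Real.log (2 + |ψ x|)) :
    ∀ ξ : ℝ, |ξ| = 1 →
      (∫⁻ x : ℝ, ∫⁻ y : ℝ,
        ENNReal.ofReal (|ψ x * ψ y| * |Real.log (abs (ξ * (x - y)))|)) < ⊤ := by
  intro ξ hξ
  classical
  obtain ⟨φ, hφm, hφe⟩ : ∃ φ : ℝ → ℝ, Measurable φ ∧ ψ =ᵐ[volume] φ :=
    ⟨hψ.1.aemeasurable.mk ψ, hψ.1.aemeasurable.measurable_mk, hψ.1.aemeasurable.ae_eq_mk⟩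
  set A : ℝ → ℝ := fun x => |φ x| with hAdef
  set u : ℝ → ℝ := fun x => A x * Real.log (2 + |x|) with hudef
  set v : ℝ → ℝ := fun x => A x * Real.log (2 + A x) with hvdef
  have hAm : Measurable A := hφm.abs
  have hA0 : ∀ x, 0 ≤ A x := fun x => abs_nonneg _
  have hum : Measurable u :=
    hAm.mul (Real.measurable_log.comp (measurable_const.add measurable_abs))
  have hvm : Measurable v := hAm.mul (Real.measurable_log.comp (measurable_const.add hAm))
  have hu0 : ∀ x, 0 ≤ u x := fun x =>
    mul_nonneg (hA0 x) (RemarkAux.log_two_add_nonneg (abs_nonneg x))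
  have hv0 : ∀ x, 0 ≤ v x := fun x =>
    mul_nonneg (hA0 x) (RemarkAux.log_two_add_nonneg (hA0 x))
  have hAint : Integrable A := hψ.abs.congr (hφe.mono fun x hx => by
    simp only [hAdef]; rw [hx])
  have huint : Integrable u := h1.congr (hφe.mono fun x hx => by
    simp only [hudef, hAdef]; rw [hx])
  have hvint : Integrable v := h2.congr (hφe.mono fun x hx => by
    simp only [hvdef, hAdef]; rw [hx])
  -- measurability of the ℝ≥0∞-valued building blocks
  have mA : Measurable fun y : ℝ => ENNReal.ofReal (A y) := hAm.ennreal_ofReal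
  have mu : Measurable fun y : ℝ => ENNReal.ofReal (u y) := hum.ennreal_ofReal
  have mv2 : Measurable fun y : ℝ => ENNReal.ofReal (2 * v y) :=
    (hvm.const_mul 2).ennreal_ofReal
  have mK : Measurable fun s : ℝ => ENNReal.ofReal (RemarkAux.K s) :=
    RemarkAux.K_measurable.ennreal_ofReal
  have mK2 : Measurable fun s : ℝ => ENNReal.ofReal (2 * RemarkAux.K s) :=
    (RemarkAux.K_measurable.const_mul 2).ennreal_ofReal
  -- finiteness of the basic integrals
  have hIA : (∫⁻ y, ENNReal.ofReal (A y)) < ⊤ := hAint.lintegral_lt_top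
  have hIu : (∫⁻ y, ENNReal.ofReal (u y)) < ⊤ := huint.lintegral_lt_top
  have hIv2 : (∫⁻ y, ENNReal.ofReal (2 * v y)) < ⊤ :=
    (hvint.const_mul 2).lintegral_lt_top
  have hIK : (∫⁻ s, ENNReal.ofReal (RemarkAux.K s)) < ⊤ :=
    RemarkAux.K_integrable.lintegral_lt_top
  have hIK2 : (∫⁻ s, ENNReal.ofReal (2 * RemarkAux.K s)) < ⊤ :=
    (RemarkAux.K_integrable.const_mul 2).lintegral_lt_top
  -- translation invariance for the kernel
  have hKtrans : ∀ x : ℝ, (∫⁻ y, ENNReal.ofReal (RemarkAux.K (x - y))) =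
      ∫⁻ s, ENNReal.ofReal (RemarkAux.K s) := by
    intro x
    have h : ∀ y : ℝ, RemarkAux.K (x - y) = RemarkAux.K (y - x) := fun y => by
      rw [← RemarkAux.K_even (y - x), neg_sub]
    simp_rw [h]
    exact lintegral_sub_right_eq_self (fun s => ENNReal.ofReal (RemarkAux.K s)) x
  have hK2trans : ∀ y : ℝ, (∫⁻ x, ENNReal.ofReal (2 * RemarkAux.K (x - y))) =
      ∫⁻ s, ENNReal.ofReal (2 * RemarkAux.K s) := fun y =>
    lintegral_sub_right_eq_self (fun s => ENNReal.ofReal (2 * RemarkAux.K s)) y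
  calc (∫⁻ x : ℝ, ∫⁻ y : ℝ,
        ENNReal.ofReal (|ψ x * ψ y| * |Real.log (abs (ξ * (x - y)))|))
      = ∫⁻ x, ∫⁻ y, ENNReal.ofReal (A x * A y * |Real.log (|x - y|)|) := by
        apply lintegral_congr_ae
        filter_upwards [hφe] with x hx
        apply lintegral_congr_ae
        filter_upwards [hφe] with y hy
        rw [abs_mul, abs_mul ξ, hξ, one_mul, hx, hy]
    _ ≤ ∫⁻ x, ∫⁻ y,
        (ENNReal.ofReal (u x) * ENNReal.ofReal (A y)
        + ENNReal.ofReal (A x) * ENNReal.ofReal (u y)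
        + ENNReal.ofReal (2 * v x) * ENNReal.ofReal (A y)
        + ENNReal.ofReal (A x) * ENNReal.ofReal (2 * v y)
        + ENNReal.ofReal (2 * A x) * ENNReal.ofReal (RemarkAux.K (x - y))
        + ENNReal.ofReal (A y) * ENNReal.ofReal (2 * RemarkAux.K (x - y))) := by
        refine lintegral_mono fun x => lintegral_mono fun y => ?_
        have hkey := RemarkAux.key (A x) (A y) x y (hA0 x) (hA0 y)
        have e1 : ENNReal.ofReal (u x * A y) =
            ENNReal.ofReal (u x) * ENNReal.ofReal (A y) := ENNReal.ofReal_mul (hu0 x)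
        have e2 : ENNReal.ofReal (A x * u y) =
            ENNReal.ofReal (A x) * ENNReal.ofReal (u y) := ENNReal.ofReal_mul (hA0 x)
        have e3 : ENNReal.ofReal ((2 * v x) * A y) =
            ENNReal.ofReal (2 * v x) * ENNReal.ofReal (A y) :=
          ENNReal.ofReal_mul (by linarith [hv0 x])
        have e4 : ENNReal.ofReal (A x * (2 * v y)) =
            ENNReal.ofReal (A x) * ENNReal.ofReal (2 * v y) := ENNReal.ofReal_mul (hA0 x)
        have e5 : ENNReal.ofReal ((2 * A x) * RemarkAux.K (x - y)) =
            ENNReal.ofReal (2 * A x) * ENNReal.ofReal (RemarkAux.K (x - y)) :=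
          ENNReal.ofReal_mul (by linarith [hA0 x])
        have e6 : ENNReal.ofReal (A y * (2 * RemarkAux.K (x - y))) =
            ENNReal.ofReal (A y) * ENNReal.ofReal (2 * RemarkAux.K (x - y)) :=
          ENNReal.ofReal_mul (hA0 y)
        calc ENNReal.ofReal (A x * A y * |Real.log (|x - y|)|)
            ≤ ENNReal.ofReal (u x * A y + A x * u y + (2 * v x) * A y + A x * (2 * v y)
                + (2 * A x) * RemarkAux.K (x - y) + A y * (2 * RemarkAux.K (x - y))) := by
              apply ENNReal.ofReal_le_ofReal
              refine le_trans hkey (le_of_eq ?_)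
              simp only [hudef, hvdef]
              ring
          _ ≤ ENNReal.ofReal (u x * A y) + ENNReal.ofReal (A x * u y)
              + ENNReal.ofReal ((2 * v x) * A y) + ENNReal.ofReal (A x * (2 * v y))
              + ENNReal.ofReal ((2 * A x) * RemarkAux.K (x - y))
              + ENNReal.ofReal (A y * (2 * RemarkAux.K (x - y))) := by
              refine le_trans ENNReal.ofReal_add_le (add_le_add ?_ le_rfl)
              refine le_trans ENNReal.ofReal_add_le (add_le_add ?_ le_rfl)
              refine le_trans ENNReal.ofReal_add_le (add_le_add ?_ le_rfl)
              refine le_trans ENNReal.ofReal_add_le (add_le_add ?_ le_rfl)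
              exact ENNReal.ofReal_add_le
          _ = _ := by rw [e1, e2, e3, e4, e5, e6]
    _ = ∫⁻ x, (ENNReal.ofReal (u x) * (∫⁻ y, ENNReal.ofReal (A y))
        + ENNReal.ofReal (A x) * (∫⁻ y, ENNReal.ofReal (u y))
        + ENNReal.ofReal (2 * v x) * (∫⁻ y, ENNReal.ofReal (A y))
        + ENNReal.ofReal (A x) * (∫⁻ y, ENNReal.ofReal (2 * v y))
        + ENNReal.ofReal (2 * A x) * (∫⁻ s, ENNReal.ofReal (RemarkAux.K s))
        + (∫⁻ y, ENNReal.ofReal (A y) * ENNReal.ofReal (2 * RemarkAux.K (x - y)))) := by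
        refine lintegral_congr fun x => ?_
        have m1 : Measurable fun y : ℝ => ENNReal.ofReal (u x) * ENNReal.ofReal (A y) :=
          mA.const_mul _
        have m2 : Measurable fun y : ℝ => ENNReal.ofReal (A x) * ENNReal.ofReal (u y) :=
          mu.const_mul _
        have m3 : Measurable fun y : ℝ => ENNReal.ofReal (2 * v x) * ENNReal.ofReal (A y) :=
          mA.const_mul _
        have m4 : Measurable fun y : ℝ => ENNReal.ofReal (A x) * ENNReal.ofReal (2 * v y) :=
          mv2.const_mul _
        have m5 : Measurable fun y : ℝ =>
            ENNReal.ofReal (2 * A x) * ENNReal.ofReal (RemarkAux.K (x - y)) :=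
          (show Measurable fun y : ℝ => ENNReal.ofReal (RemarkAux.K (x - y)) from
            mK.comp (measurable_const.sub measurable_id)).const_mul _
        rw [lintegral_add_left ((((m1.fun_add m2).fun_add m3).fun_add m4).fun_add m5),
          lintegral_add_left (((m1.fun_add m2).fun_add m3).fun_add m4),
          lintegral_add_left ((m1.fun_add m2).fun_add m3),
          lintegral_add_left (m1.fun_add m2),
          lintegral_add_left m1,
          lintegral_const_mul _ mA, lintegral_const_mul _ mu, lintegral_const_mul _ mA,
          lintegral_const_mul _ mv2,
          lintegral_const_mul _
            (show Measurable fun y : ℝ => ENNReal.ofReal (RemarkAux.K (x - y)) from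
              mK.comp (measurable_const.sub measurable_id)),
          show (∫⁻ y, ENNReal.ofReal (RemarkAux.K (x - y))) =
            ∫⁻ s, ENNReal.ofReal (RemarkAux.K s) from hKtrans x]
    _ = (∫⁻ y, ENNReal.ofReal (u y)) * (∫⁻ y, ENNReal.ofReal (A y))
        + (∫⁻ y, ENNReal.ofReal (A y)) * (∫⁻ y, ENNReal.ofReal (u y))
        + (∫⁻ y, ENNReal.ofReal (2 * v y)) * (∫⁻ y, ENNReal.ofReal (A y))
        + (∫⁻ y, ENNReal.ofReal (A y)) * (∫⁻ y, ENNReal.ofReal (2 * v y))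
        + (∫⁻ y, ENNReal.ofReal (2 * A y)) * (∫⁻ s, ENNReal.ofReal (RemarkAux.K s))
        + (∫⁻ y, ENNReal.ofReal (A y)) * (∫⁻ s, ENNReal.ofReal (2 * RemarkAux.K s)) := by
        have m1 : Measurable fun x : ℝ =>
            ENNReal.ofReal (u x) * (∫⁻ y, ENNReal.ofReal (A y)) := mu.mul_const _
        have m2 : Measurable fun x : ℝ =>
            ENNReal.ofReal (A x) * (∫⁻ y, ENNReal.ofReal (u y)) := mA.mul_const _
        have m3 : Measurable fun x : ℝ =>
            ENNReal.ofReal (2 * v x) * (∫⁻ y, ENNReal.ofReal (A y)) := mv2.mul_const _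
        have m4 : Measurable fun x : ℝ =>
            ENNReal.ofReal (A x) * (∫⁻ y, ENNReal.ofReal (2 * v y)) := mA.mul_const _
        have m5 : Measurable fun x : ℝ =>
            ENNReal.ofReal (2 * A x) * (∫⁻ s, ENNReal.ofReal (RemarkAux.K s)) :=
          ((hAm.const_mul 2).ennreal_ofReal).mul_const _
        have hswap : (∫⁻ x, ∫⁻ y,
            ENNReal.ofReal (A y) * ENNReal.ofReal (2 * RemarkAux.K (x - y)))
            = (∫⁻ y, ENNReal.ofReal (A y)) * (∫⁻ s, ENNReal.ofReal (2 * RemarkAux.K s)) := by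
          rw [lintegral_lintegral_swap]
          · refine Eq.trans (lintegral_congr fun y => ?_)
              (lintegral_mul_const _ mA)
            rw [lintegral_const_mul _
              (show Measurable fun x : ℝ => ENNReal.ofReal (2 * RemarkAux.K (x - y)) from
                mK2.comp (measurable_id.sub measurable_const)), hK2trans y]
          · exact ((mA.comp measurable_snd).mul
              (mK2.comp (measurable_fst.sub measurable_snd))).aemeasurable
        have m6 : Measurable fun x : ℝ => (∫⁻ y,
            ENNReal.ofReal (A y) * ENNReal.ofReal (2 * RemarkAux.K (x - y))) := by
          apply Measurable.lintegral_prod_right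
          exact ((mA.comp measurable_snd).mul
            (mK2.comp (measurable_fst.sub measurable_snd)))
        rw [lintegral_add_left ((((m1.fun_add m2).fun_add m3).fun_add m4).fun_add m5),
          lintegral_add_left (((m1.fun_add m2).fun_add m3).fun_add m4),
          lintegral_add_left ((m1.fun_add m2).fun_add m3),
          lintegral_add_left (m1.fun_add m2),
          lintegral_add_left m1,
          lintegral_mul_const _ mu, lintegral_mul_const _ mA, lintegral_mul_const _ mv2,
          lintegral_mul_const _ mA, lintegral_mul_const _ ((hAm.const_mul 2).ennreal_ofReal),
          hswap]
    _ < ⊤ := by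
        have hIA2 : (∫⁻ y, ENNReal.ofReal (2 * A y)) < ⊤ :=
          (hAint.const_mul 2).lintegral_lt_top
        exact ENNReal.add_lt_top.mpr ⟨ENNReal.add_lt_top.mpr ⟨ENNReal.add_lt_top.mpr
          ⟨ENNReal.add_lt_top.mpr ⟨ENNReal.add_lt_top.mpr
          ⟨ENNReal.mul_lt_top hIu hIA, ENNReal.mul_lt_top hIA hIu⟩,
          ENNReal.mul_lt_top hIv2 hIA⟩, ENNReal.mul_lt_top hIA hIv2⟩,
          ENNReal.mul_lt_top hIA2 hIK⟩, ENNReal.mul_lt_top hIA hIK2⟩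
end
end

section
/- Let ψ ∈ L¹(ℝⁿ) and suppose J_ε(ψ) = sup_{|ξ|=1} ∬_{ℝⁿ×ℝⁿ} |ψ(x)ψ(y)| |⟨ξ, x−y⟩|^{-ε} dx dy < ∞ for some ε ∈ (0,1]. Then there is a constant c such that ∫_1^2 |ψ̂(tξ)|² dt ≤ c|ξ|^{-ε} for all ξ ∈ ℝⁿ. -/
open MeasureTheory Set NNReal ENNReal RealInnerProductSpace

noncomputable section

/-- The Fourier transform `ψ̂(ξ) = ∫ ψ(x) e^{-2πi⟨x,ξ⟩} dx` of a real valued function. -/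
def ft (n : ℕ) (ψ : Euc n → ℝ) (ξ : Euc n) : ℂ :=
  ∫ x, (ψ x : ℂ) * Complex.exp (-2 * Real.pi * Complex.I * (⟪x, ξ⟫ : ℝ))

private lemma conj_phase (θ : ℝ) :
    (starRingEnd ℂ) (Complex.exp ((θ : ℂ) * Complex.I)) =
      Complex.exp (((-θ : ℝ) : ℂ) * Complex.I) := by
  rw [← Complex.exp_conj]
  congr 1
  rw [map_mul, Complex.conj_ofReal, Complex.conj_I]
  push_cast
  ring

private lemma phase_mul (θ₁ θ₂ : ℝ) :
    Complex.exp ((θ₁ : ℂ) * Complex.I) * Complex.exp ((θ₂ : ℂ) * Complex.I) =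
      Complex.exp (((θ₁ + θ₂ : ℝ) : ℂ) * Complex.I) := by
  rw [← Complex.exp_add]
  push_cast
  ring_nf

/-- The oscillatory integral bound: `‖∫_1^2 e^{-2πitb} dt‖ ≤ |b|^{-ε}` for `b ≠ 0`. -/
private lemma osc_bound {ε : ℝ} (hε0 : 0 < ε) (hε1 : ε ≤ 1) {b : ℝ} (hb : b ≠ 0) :
    ‖∫ t in Set.Ioc (1:ℝ) 2,
        Complex.exp (((-2 * Real.pi * (t * b) : ℝ) : ℂ) * Complex.I)‖ ≤ |b| ^ (-ε) := by
  have hbpos : 0 < |b| := abs_pos.2 hb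
  rcases le_or_gt 1 |b| with h1b | h1b
  · -- |b| ≥ 1 : use the explicit antiderivative
    have h12 : (1:ℝ) ≤ 2 := one_le_two
    have hc : (((-2 * Real.pi * b : ℝ) : ℂ) * Complex.I) ≠ 0 := by
      apply mul_ne_zero _ Complex.I_ne_zero
      simp only [ne_eq, Complex.ofReal_eq_zero]
      have := Real.pi_ne_zero
      intro h
      apply hb
      nlinarith [Real.pi_pos]
    have heq : ∀ t : ℝ, (((-2 * Real.pi * (t * b) : ℝ) : ℂ) * Complex.I) =
        ((((-2 * Real.pi * b : ℝ) : ℂ) * Complex.I) * (t : ℂ)) := by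
      intro t; push_cast; ring
    rw [← intervalIntegral.integral_of_le h12]
    have : (∫ t in (1:ℝ)..2, Complex.exp (((-2 * Real.pi * (t * b) : ℝ) : ℂ) * Complex.I)) =
        ∫ t in (1:ℝ)..2, Complex.exp ((((-2 * Real.pi * b : ℝ) : ℂ) * Complex.I) * (t : ℂ)) := by
      apply intervalIntegral.integral_congr
      intro t _
      show Complex.exp _ = Complex.exp _
      rw [heq t]
    rw [this, integral_exp_mul_complex hc]
    have hnorm2 : ‖Complex.exp ((((-2 * Real.pi * b : ℝ) : ℂ) * Complex.I) * (2:ℂ))‖ = 1 := by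
      rw [show ((((-2 * Real.pi * b : ℝ) : ℂ) * Complex.I) * (2:ℂ)) =
          ((-2 * Real.pi * b * 2 : ℝ) : ℂ) * Complex.I by push_cast; ring]
      exact Complex.norm_exp_ofReal_mul_I _
    have hnorm1 : ‖Complex.exp ((((-2 * Real.pi * b : ℝ) : ℂ) * Complex.I) * (1:ℂ))‖ = 1 := by
      rw [show ((((-2 * Real.pi * b : ℝ) : ℂ) * Complex.I) * (1:ℂ)) =
          ((-2 * Real.pi * b * 1 : ℝ) : ℂ) * Complex.I by push_cast; ring]
      exact Complex.norm_exp_ofReal_mul_I _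
    have hnormc : ‖(((-2 * Real.pi * b : ℝ) : ℂ) * Complex.I)‖ = 2 * Real.pi * |b| := by
      rw [norm_mul, Complex.norm_real, Real.norm_eq_abs, Complex.norm_I,
        mul_one, abs_mul, abs_mul]
      rw [abs_of_pos Real.pi_pos]
      norm_num
    rw [norm_div, hnormc]
    have hub : ‖Complex.exp ((((-2 * Real.pi * b : ℝ) : ℂ) * Complex.I) * (2:ℂ)) -
        Complex.exp ((((-2 * Real.pi * b : ℝ) : ℂ) * Complex.I) * (1:ℂ))‖ ≤ 2 := by
      calc _ ≤ _ := norm_sub_le _ _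
        _ ≤ (2:ℝ) := by rw [hnorm2, hnorm1]; norm_num
    have hπ : (1:ℝ) ≤ Real.pi := by linarith [Real.pi_gt_three]
    have key : (2:ℝ) / (2 * Real.pi * |b|) ≤ |b| ^ (-ε) := by
      have h1 : (2:ℝ) / (2 * Real.pi * |b|) ≤ 1 / |b| := by
        rw [div_le_div_iff₀ (by positivity) hbpos]
        nlinarith
      have h2 : (1:ℝ) / |b| = |b| ^ (-1 : ℝ) := by
        rw [Real.rpow_neg_one]; exact one_div _
      have h3 : |b| ^ (-1 : ℝ) ≤ |b| ^ (-ε) :=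
        Real.rpow_le_rpow_of_exponent_le h1b (by linarith)
      linarith
    calc _ ≤ (2:ℝ) / (2 * Real.pi * |b|) :=
          div_le_div_of_nonneg_right hub (by positivity) |>.trans_eq rfl
      _ ≤ |b| ^ (-ε) := key
  · -- |b| < 1 : trivial bound by the measure of the interval
    have htriv : ‖∫ t in Set.Ioc (1:ℝ) 2,
        Complex.exp (((-2 * Real.pi * (t * b) : ℝ) : ℂ) * Complex.I)‖ ≤ 1 := by
      calc _ ≤ ∫ t in Set.Ioc (1:ℝ) 2,
            ‖Complex.exp (((-2 * Real.pi * (t * b) : ℝ) : ℂ) * Complex.I)‖ :=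
            norm_integral_le_integral_norm _
        _ = ∫ _t in Set.Ioc (1:ℝ) 2, (1:ℝ) := by
            apply integral_congr_ae
            filter_upwards with t
            exact Complex.norm_exp_ofReal_mul_I _
        _ = 1 := by
            simp [Real.volume_Ioc]
            norm_num
    have hge : (1:ℝ) ≤ |b| ^ (-ε) :=
      Real.one_le_rpow_of_pos_of_le_one_of_nonpos hbpos h1b.le (by linarith)
    linarith

/-- **Lemma 2.** If `ψ ∈ L¹(ℝⁿ)` and
`J_ε(ψ) = sup_{|ξ|=1} ∬ |ψ(x)ψ(y)| |⟨ξ,x-y⟩|^{-ε} dx dy < ∞` for some `ε ∈ (0,1]`, then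
`∫_1^2 |ψ̂(tξ)|² dt ≤ c |ξ|^{-ε}` for all `ξ` (the inequality being stated in `ℝ≥0∞`, so
that the right-hand side is `∞` at `ξ = 0`). -/
theorem lemma2 {n : ℕ} (ψ : Euc n → ℝ) (ε : ℝ) (hε0 : 0 < ε) (hε1 : ε ≤ 1)
    (hψ : Integrable ψ)
    (hJ : ∃ C : ℝ, ∀ ξ : Euc n, ‖ξ‖ = 1 →
      (∫⁻ x : Euc n, ∫⁻ y : Euc n, ENNReal.ofReal |ψ x * ψ y| *
        (ENNReal.ofReal |(⟪ξ, x - y⟫ : ℝ)|) ^ (-ε)) ≤ ENNReal.ofReal C) :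
    ∃ c : ℝ≥0, ∀ ξ : Euc n,
      (∫⁻ t in Set.Ioc (1:ℝ) 2, ENNReal.ofReal (‖ft n ψ (t • ξ)‖ ^ 2)) ≤
        c * (ENNReal.ofReal ‖ξ‖) ^ (-ε) := by
  obtain ⟨C, hC⟩ := hJ
  refine ⟨C.toNNReal + 1, fun ξ => ?_⟩
  by_cases hξ : ξ = 0
  · subst hξ
    have h0 : (ENNReal.ofReal ‖(0 : Euc n)‖) ^ (-ε) = ⊤ := by
      rw [norm_zero, ENNReal.ofReal_zero, ENNReal.zero_rpow_of_neg (by linarith)]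
    rw [h0, ENNReal.mul_top (by simp)]
    exact le_top
  -- ### main case ξ ≠ 0
  have hnξ : (0:ℝ) < ‖ξ‖ := norm_pos_iff.2 hξ
  set u : Euc n := ‖ξ‖⁻¹ • ξ with hu_def
  have hu : ‖u‖ = 1 := by
    rw [hu_def, norm_smul, norm_inv, norm_norm, inv_mul_cancel₀ hnξ.ne']
  have hinner : ∀ w : Euc n, (⟪ξ, w⟫ : ℝ) = ‖ξ‖ * ⟪u, w⟫ := by
    intro w
    rw [hu_def, real_inner_smul_left]
    field_simp
  -- kernel and integrand
  set K : ℝ → ℂ := fun b => ∫ t in Set.Ioc (1:ℝ) 2,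
    Complex.exp (((-2 * Real.pi * (t * b) : ℝ) : ℂ) * Complex.I) with hK_def
  set a : Euc n × Euc n → ℝ := fun z => (⟪z.1, ξ⟫ : ℝ) - (⟪z.2, ξ⟫ : ℝ) with ha_def
  set H : ℝ → Euc n × Euc n → ℂ := fun t z => ((ψ z.1 * ψ z.2 : ℝ) : ℂ) *
    Complex.exp (((-2 * Real.pi * (t * a z) : ℝ) : ℂ) * Complex.I) with hH_def
  set μt : Measure ℝ := volume.restrict (Set.Ioc (1:ℝ) 2) with hμt_def
  haveI : IsFiniteMeasure μt := by
    constructor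
    rw [hμt_def, Measure.restrict_apply_univ, Real.volume_Ioc]
    exact ENNReal.ofReal_lt_top
  -- rewriting ft
  have hft : ∀ t : ℝ, ft n ψ (t • ξ) =
      ∫ x, (ψ x : ℂ) * Complex.exp (((-2 * Real.pi * (t * (⟪x, ξ⟫ : ℝ)) : ℝ) : ℂ) * Complex.I) := by
    intro t
    unfold ft
    congr 1
    funext x
    congr 1
    rw [real_inner_smul_right]
    push_cast
    ring
  -- the product formula
  have hprod : ∀ t : ℝ, (∫ z, H t z ∂(volume.prod volume)) =
      ft n ψ (t • ξ) * (starRingEnd ℂ) (ft n ψ (t • ξ)) := by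
    intro t
    rw [hft t, ← integral_conj]
    rw [← integral_prod_mul
      (fun x => (ψ x : ℂ) * Complex.exp (((-2 * Real.pi * (t * (⟪x, ξ⟫ : ℝ)) : ℝ) : ℂ) * Complex.I))
      (fun y => (starRingEnd ℂ) ((ψ y : ℂ) *
        Complex.exp (((-2 * Real.pi * (t * (⟪y, ξ⟫ : ℝ)) : ℝ) : ℂ) * Complex.I)))]
    congr 1
    funext z
    rw [map_mul, Complex.conj_ofReal, conj_phase]
    conv_rhs => rw [mul_mul_mul_comm, phase_mul]
    rw [hH_def]
    simp only []
    rw [show ((ψ z.1 * ψ z.2 : ℝ) : ℂ) = (ψ z.1 : ℂ) * (ψ z.2 : ℂ) by push_cast; ring]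
    congr 2
    rw [ha_def]
    ring
  -- integrability of H
  have hψc : Integrable (fun x : Euc n => (ψ x : ℂ)) := hψ.ofReal
  have hbase : Integrable (fun z : Euc n × Euc n => ((ψ z.1 * ψ z.2 : ℝ) : ℂ))
      (volume.prod volume) := by
    have := hψc.mul_prod hψc
    apply this.congr
    filter_upwards with z
    push_cast
    ring
  have hbase' : Integrable (fun p : ℝ × (Euc n × Euc n) => ((ψ p.2.1 * ψ p.2.2 : ℝ) : ℂ))
      (μt.prod (volume.prod volume)) := by
    have h1 : Integrable (fun _ : ℝ => (1:ℂ)) μt := integrable_const _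
    have := h1.mul_prod hbase
    simpa using this
  have hconta : Continuous a := by
    rw [ha_def]
    exact (continuous_fst.inner continuous_const).sub (continuous_snd.inner continuous_const)
  have hcont : Continuous (fun p : ℝ × (Euc n × Euc n) =>
      Complex.exp (((-2 * Real.pi * (p.1 * a p.2) : ℝ) : ℂ) * Complex.I)) := by
    apply Complex.continuous_exp.comp
    apply Continuous.mul _ continuous_const
    apply Complex.continuous_ofReal.comp
    exact continuous_const.mul (continuous_fst.mul (hconta.comp continuous_snd))
  have HInt : Integrable (Function.uncurry H) (μt.prod (volume.prod volume)) := by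
    have := hbase'.bdd_mul hcont.aestronglyMeasurable
      (Filter.Eventually.of_forall fun p => le_of_eq (Complex.norm_exp_ofReal_mul_I _))
    apply this.congr
    filter_upwards with p
    rw [Function.uncurry, hH_def]
    simp only []
    ring
  -- integrability of the marginal and of ‖F t‖²
  have hFi : Integrable (fun t => ∫ z, H t z ∂(volume.prod volume)) μt := by
    have := HInt.integral_prod_left
    exact this
  have hre : ∀ t : ℝ, ‖ft n ψ (t • ξ)‖ ^ 2 = (∫ z, H t z ∂(volume.prod volume)).re := by
    intro t
    rw [hprod t, Complex.mul_conj]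
    rw [Complex.ofReal_re, Complex.normSq_eq_norm_sq]
  have hF2 : Integrable (fun t => ‖ft n ψ (t • ξ)‖ ^ 2) μt := by
    apply (hFi.re).congr
    filter_upwards with t
    exact (hre t).symm
  -- the key identity
  have hswap : (∫ t, ∫ z, H t z ∂(volume.prod volume) ∂μt) =
      ∫ z, (∫ t, H t z ∂μt) ∂(volume.prod volume) := integral_integral_swap HInt
  have hinnerK : ∀ z : Euc n × Euc n, (∫ t, H t z ∂μt) = ((ψ z.1 * ψ z.2 : ℝ) : ℂ) * K (a z) := by
    intro t
    rw [hK_def]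
    simp only []
    rw [← integral_const_mul]
  have key : (∫ t, ‖ft n ψ (t • ξ)‖ ^ 2 ∂μt) =
      (∫ z, ((ψ z.1 * ψ z.2 : ℝ) : ℂ) * K (a z) ∂(volume.prod volume)).re := by
    rw [show (fun t => ‖ft n ψ (t • ξ)‖ ^ 2) = fun t => (∫ z, H t z ∂(volume.prod volume)).re from
      funext hre]
    have h2 : (∫ t, (∫ z, H t z ∂(volume.prod volume)).re ∂μt) =
        (∫ t, ∫ z, H t z ∂(volume.prod volume) ∂μt).re := integral_re hFi
    rw [h2, hswap]
    congr 1
    exact integral_congr_ae (Filter.Eventually.of_forall hinnerK)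
  -- measurability for Tonelli
  have m1 : AEMeasurable (fun z : Euc n × Euc n => ψ z.1 * ψ z.2) (volume.prod volume) :=
    ((hψ.aestronglyMeasurable.comp_fst).mul (hψ.aestronglyMeasurable.comp_snd)).aemeasurable
  have m2 : AEMeasurable (fun z : Euc n × Euc n => ENNReal.ofReal |ψ z.1 * ψ z.2|)
      (volume.prod volume) := (ENNReal.measurable_ofReal.comp measurable_abs).comp_aemeasurable m1
  have m3 : Measurable fun z : Euc n × Euc n =>
      (ENNReal.ofReal |(⟪u, z.1 - z.2⟫ : ℝ)|) ^ (-ε) := by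
    have hcont2 : Continuous fun z : Euc n × Euc n => (⟪u, z.1 - z.2⟫ : ℝ) :=
      continuous_const.inner (continuous_fst.sub continuous_snd)
    exact (ENNReal.continuous_rpow_const.comp
      ((ENNReal.continuous_ofReal.comp continuous_abs).comp hcont2)).measurable
  have hmeas : AEMeasurable (fun z : Euc n × Euc n =>
      ENNReal.ofReal |ψ z.1 * ψ z.2| * (ENNReal.ofReal |(⟪u, z.1 - z.2⟫ : ℝ)|) ^ (-ε))
      (volume.prod volume) := m2.mul m3.aemeasurable
  -- the constant (ofReal ‖ξ‖)^(-ε) is finite and nonzero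
  have hbase_ne0 : ENNReal.ofReal ‖ξ‖ ≠ 0 := by
    simp only [ne_eq, ENNReal.ofReal_eq_zero, not_le]
    exact hnξ
  have hAne : (ENNReal.ofReal ‖ξ‖) ^ (-ε) ≠ ⊤ := by
    rw [Ne, ENNReal.rpow_eq_top_iff]
    rintro (⟨h0, _⟩ | ⟨ht, _⟩)
    · exact hbase_ne0 h0
    · exact ENNReal.ofReal_ne_top ht
  -- the scaling identity
  have hscale : ∀ w : Euc n, (ENNReal.ofReal |(⟪ξ, w⟫ : ℝ)|) ^ (-ε) =
      (ENNReal.ofReal ‖ξ‖) ^ (-ε) * (ENNReal.ofReal |(⟪u, w⟫ : ℝ)|) ^ (-ε) := by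
    intro w
    rw [hinner w, abs_mul, abs_of_pos hnξ, ENNReal.ofReal_mul hnξ.le,
      ENNReal.mul_rpow_of_ne_top ENNReal.ofReal_ne_top ENNReal.ofReal_ne_top]
  -- the pointwise bound
  have hpt : ∀ z : Euc n × Euc n,
      (‖((ψ z.1 * ψ z.2 : ℝ) : ℂ) * K (a z)‖₊ : ℝ≥0∞) ≤
        ENNReal.ofReal |ψ z.1 * ψ z.2| * (ENNReal.ofReal |(⟪ξ, z.1 - z.2⟫ : ℝ)|) ^ (-ε) := by
    intro z
    have hab : (⟪ξ, z.1 - z.2⟫ : ℝ) = a z := by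
      rw [inner_sub_right, ha_def]
      simp only []
      rw [real_inner_comm ξ z.1, real_inner_comm ξ z.2]
    rw [hab]
    rcases eq_or_ne (ψ z.1 * ψ z.2) 0 with hz | hz
    · rw [hz]
      simp
    rcases eq_or_ne (a z) 0 with hb | hb
    · rw [hb]
      simp only [abs_zero, ENNReal.ofReal_zero, ENNReal.zero_rpow_of_neg (by linarith : -ε < 0)]
      rw [ENNReal.mul_top (by simpa [ENNReal.ofReal_eq_zero, not_le] using hz)]
      exact le_top
    · rw [← enorm_eq_nnnorm, ← ofReal_norm, norm_mul, Complex.norm_real ((ψ z.1 * ψ z.2 : ℝ)),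
        Real.norm_eq_abs]
      calc ENNReal.ofReal (|ψ z.1 * ψ z.2| * ‖K (a z)‖)
          ≤ ENNReal.ofReal (|ψ z.1 * ψ z.2| * |a z| ^ (-ε)) := by
            apply ENNReal.ofReal_le_ofReal
            exact mul_le_mul_of_nonneg_left (osc_bound hε0 hε1 hb) (abs_nonneg _)
        _ = ENNReal.ofReal |ψ z.1 * ψ z.2| * ENNReal.ofReal (|a z| ^ (-ε)) :=
            ENNReal.ofReal_mul (abs_nonneg _)
        _ = ENNReal.ofReal |ψ z.1 * ψ z.2| * (ENNReal.ofReal |a z|) ^ (-ε) := by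
            rw [ENNReal.ofReal_rpow_of_pos (abs_pos.2 hb)]
  -- the main chain
  calc (∫⁻ t in Set.Ioc (1:ℝ) 2, ENNReal.ofReal (‖ft n ψ (t • ξ)‖ ^ 2))
      = ENNReal.ofReal (∫ t, ‖ft n ψ (t • ξ)‖ ^ 2 ∂μt) :=
        (ofReal_integral_eq_lintegral_ofReal hF2
          (Filter.Eventually.of_forall fun t => by positivity)).symm
    _ ≤ ENNReal.ofReal ‖∫ z, ((ψ z.1 * ψ z.2 : ℝ) : ℂ) * K (a z) ∂(volume.prod volume)‖ := by
        rw [key]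
        exact ENNReal.ofReal_le_ofReal (Complex.re_le_norm _)
    _ ≤ ∫⁻ z, (‖((ψ z.1 * ψ z.2 : ℝ) : ℂ) * K (a z)‖₊ : ℝ≥0∞) ∂(volume.prod volume) := by
        rw [ofReal_norm]
        exact enorm_integral_le_lintegral_enorm _
    _ ≤ ∫⁻ z, ENNReal.ofReal |ψ z.1 * ψ z.2| *
          ((ENNReal.ofReal ‖ξ‖) ^ (-ε) * (ENNReal.ofReal |(⟪u, z.1 - z.2⟫ : ℝ)|) ^ (-ε))
          ∂(volume.prod volume) := by
        apply lintegral_mono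
        intro z
        dsimp only
        rw [← hscale (z.1 - z.2)]
        exact hpt z
    _ = (ENNReal.ofReal ‖ξ‖) ^ (-ε) * ∫⁻ z, ENNReal.ofReal |ψ z.1 * ψ z.2| *
          (ENNReal.ofReal |(⟪u, z.1 - z.2⟫ : ℝ)|) ^ (-ε) ∂(volume.prod volume) := by
        rw [← lintegral_const_mul' _ _ hAne]
        apply lintegral_congr
        intro z
        rw [mul_left_comm]
    _ = (ENNReal.ofReal ‖ξ‖) ^ (-ε) * ∫⁻ x, ∫⁻ y, ENNReal.ofReal |ψ x * ψ y| *
          (ENNReal.ofReal |(⟪u, x - y⟫ : ℝ)|) ^ (-ε) := by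
        rw [lintegral_prod _ hmeas]
    _ ≤ (ENNReal.ofReal ‖ξ‖) ^ (-ε) * ENNReal.ofReal C :=
        mul_le_mul_right (hC u hu) _
    _ ≤ ↑(C.toNNReal + 1) * (ENNReal.ofReal ‖ξ‖) ^ (-ε) := by
        rw [mul_comm]
        apply mul_le_mul_left
        rw [ENNReal.ofReal]
        exact_mod_cast le_of_lt (lt_add_one _)
end
end

section
/- Let n ≥ 1, let h ≥ 0 be a non-increasing function on (0,∞) such that H(x) = h(|x|) belongs to L¹(ℝⁿ) ∩ L^∞(ℝⁿ), and let 0 < δ < 1. Then sup_{x₁ ∈ ℝ} ∫_{ℝⁿ} h(|y|) |x₁ − y₁|^{-δ} dy < ∞, where y₁ denotes the first coordinate of y ∈ ℝⁿ. -/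
open MeasureTheory Set NNReal ENNReal RealInnerProductSpace

noncomputable section

def eucTail {m : ℕ} (y : Euc (m + 1)) : Euc m := WithLp.toLp 2 (fun i : Fin m => y i.succ)
def eucSplit {m : ℕ} (y : Euc (m + 1)) : ℝ × Euc m := (y 0, eucTail y)

lemma eucNormSq {m : ℕ} (y : Euc (m + 1)) :
    ‖y‖ ^ 2 = (y 0) ^ 2 + ‖eucTail y‖ ^ 2 := by
  rw [EuclideanSpace.norm_eq y, EuclideanSpace.norm_eq (eucTail y),
    Real.sq_sqrt (by positivity), Real.sq_sqrt (by positivity), Fin.sum_univ_succ]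
  have : ∀ i : Fin m, eucTail y i = y i.succ := fun i => rfl
  simp [this, Real.norm_eq_abs, sq_abs]

lemma eucTail_norm_le {m : ℕ} (y : Euc (m + 1)) : ‖eucTail y‖ ≤ ‖y‖ := by
  have h := eucNormSq y
  nlinarith [norm_nonneg (eucTail y), norm_nonneg y, sq_nonneg (y 0)]

lemma eucSplit_measurePreserving (m : ℕ) :
    MeasurePreserving (eucSplit (m := m)) volume volume := by
  have e1 := EuclideanSpace.volume_preserving_symm_measurableEquiv_toLp (ι := Fin (m + 1))
  have e2 := volume_preserving_piFinSuccAbove (fun _ : Fin (m + 1) => ℝ) 0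
  have e3 := (EuclideanSpace.volume_preserving_symm_measurableEquiv_toLp (ι := Fin m)).symm
  have e4 : MeasurePreserving
      (Prod.map (fun t : ℝ => t) (⇑(MeasurableEquiv.toLp 2 (Fin m → ℝ))))
      volume volume := by
    rw [Measure.volume_eq_prod, Measure.volume_eq_prod]
    exact (MeasurePreserving.id _).prod e3
  exact (e4.comp e2).comp e1

-- essential sup bound for antitone radial L^∞ functions
lemma hC_bound {m : ℕ} (h : ℝ → ℝ) (hmono : AntitoneOn h (Set.Ioi 0)) (r : ℝ) (hr : 0 < r) :
    ENNReal.ofReal (h r) ≤ eLpNormEssSup (fun x : Euc (m + 1) => h ‖x‖) volume := by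
  set C := eLpNormEssSup (fun x : Euc (m + 1) => h ‖x‖) volume with hC
  by_contra hcon
  push_neg at hcon
  set U : Set (Euc (m + 1)) := {y | r / 2 < ‖y‖ ∧ ‖y‖ < r} with hU
  have hUopen : IsOpen U :=
    (isOpen_lt continuous_const continuous_norm).inter (isOpen_lt continuous_norm continuous_const)
  have hUne : U.Nonempty := by
    refine ⟨EuclideanSpace.single 0 (3 * r / 4), ?_, ?_⟩ <;>
      rw [EuclideanSpace.norm_single, Real.norm_eq_abs, abs_of_nonneg (by linarith)] <;> linarith
  have hpos : 0 < volume U := hUopen.measure_pos volume hUne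
  have hae : volume {y : Euc (m + 1) | ¬ ((‖h ‖y‖‖₊ : ℝ≥0∞) ≤ C)} = 0 :=
    ae_iff.mp (ae_le_eLpNormEssSup (f := fun x : Euc (m + 1) => h ‖x‖) (μ := volume))
  have hsub : U ⊆ {y : Euc (m + 1) | ¬ ((‖h ‖y‖‖₊ : ℝ≥0∞) ≤ C)} := by
    rintro y ⟨h1, h2⟩
    have hy0 : 0 < ‖y‖ := lt_trans (by linarith) h1
    have hhr : h r ≤ h ‖y‖ := hmono (mem_Ioi.mpr hy0) (mem_Ioi.mpr hr) h2.le
    intro hle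
    have h3 : ENNReal.ofReal (h r) ≤ (‖h ‖y‖‖₊ : ℝ≥0∞) :=
      le_trans (ENNReal.ofReal_le_ofReal hhr) (Real.ofReal_le_enorm _)
    exact absurd (le_trans h3 hle) (not_le.mpr hcon)
  exact absurd (measure_mono_null hsub hae) (ne_of_gt hpos)


set_option maxHeartbeats 1000000 in
/-- **Estimate (4.1).** Let `h ≥ 0` be non-increasing on `(0,∞)` with
`H(x) = h(|x|) ∈ L¹(ℝⁿ) ∩ L^∞(ℝⁿ)` and let `0 < δ < 1`.  Then
`sup_{x₁ ∈ ℝ} ∫_{ℝⁿ} h(|y|) |x₁ − y₁|^{-δ} dy < ∞`. -/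
theorem estimate_4_1 {n : ℕ} (hn : 0 < n) (h : ℝ → ℝ) (δ : ℝ)
    (hh0 : ∀ r : ℝ, 0 < r → 0 ≤ h r) (hmono : AntitoneOn h (Set.Ioi 0))
    (hH1 : Integrable fun x : Euc n => h ‖x‖)
    (hHtop : MemLp (fun x : Euc n => h ‖x‖) ⊤)
    (hδ0 : 0 < δ) (hδ1 : δ < 1) :
    ∃ C : ℝ, ∀ x₁ : ℝ,
      (∫⁻ y : Euc n, ENNReal.ofReal (h ‖y‖) *
        (ENNReal.ofReal |x₁ - y ⟨0, hn⟩|) ^ (-δ)) ≤ ENNReal.ofReal C := by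
  obtain ⟨m, rfl⟩ : ∃ m, n = m + 1 := ⟨n - 1, by omega⟩
  have hidx : (⟨0, hn⟩ : Fin (m + 1)) = 0 := by ext; simp
  simp only [hidx]
  -- essential sup constant
  set C : ℝ≥0∞ := eLpNormEssSup (fun x : Euc (m + 1) => h ‖x‖) volume with hCdef
  have hCfin : C < ∞ := by
    have := hHtop.2; rwa [eLpNorm_exponent_top] at this
  have hC : ∀ r : ℝ, 0 < r → ENNReal.ofReal (h r) ≤ C := fun r hr => hC_bound h hmono r hr
  -- the radial weight
  set F : Euc (m + 1) → ℝ≥0∞ := fun y => ENNReal.ofReal (h ‖y‖) with hFdef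
  have hFaem : AEMeasurable F volume := hH1.1.aemeasurable.ennreal_ofReal
  have hC1fin : (∫⁻ y : Euc (m + 1), F y) < ∞ := by
    refine lt_of_le_of_lt (lintegral_mono fun y => Real.ofReal_le_enorm _) hH1.2
  set C1 : ℝ≥0∞ := ∫⁻ y : Euc (m + 1), F y with hC1def
  -- the kernel near the singularity
  set k : ℝ → ℝ≥0∞ :=
    fun t => (Ioo (-1 : ℝ) 1).indicator (fun t => (ENNReal.ofReal |t|) ^ (-δ)) t with hkdef
  have hkmeas : Measurable k := by
    apply Measurable.indicator _ measurableSet_Ioo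
    exact (ENNReal.continuous_rpow_const.comp
      (ENNReal.continuous_ofReal.comp continuous_abs)).measurable
  -- finiteness of the kernel integral
  have hIoo : (∫⁻ t in Ioo (0 : ℝ) 1, (ENNReal.ofReal |t|) ^ (-δ)) < ∞ := by
    have hInt : IntegrableOn (fun t : ℝ => t ^ (-δ)) (Ioo 0 1) volume := by
      have h1 := intervalIntegral.intervalIntegrable_rpow' (a := (0:ℝ)) (b := 1)
        (show (-1 : ℝ) < -δ by linarith)
      rw [intervalIntegrable_iff, uIoc_of_le (by norm_num : (0:ℝ) ≤ 1)] at h1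
      exact h1.mono_set Ioo_subset_Ioc_self
    have heq : ∀ᵐ t ∂(volume.restrict (Ioo (0 : ℝ) 1)),
        (ENNReal.ofReal |t|) ^ (-δ) = ENNReal.ofReal (t ^ (-δ)) := by
      filter_upwards [ae_restrict_mem measurableSet_Ioo] with t ht
      rw [abs_of_pos ht.1, ← ENNReal.ofReal_rpow_of_pos ht.1]
    calc (∫⁻ t in Ioo (0 : ℝ) 1, (ENNReal.ofReal |t|) ^ (-δ))
        = ∫⁻ t in Ioo (0 : ℝ) 1, ENNReal.ofReal (t ^ (-δ)) := lintegral_congr_ae heq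
      _ < ∞ := hInt.lintegral_lt_top
  have hIco : (∫⁻ t in Ico (0 : ℝ) 1, (ENNReal.ofReal |t|) ^ (-δ)) < ∞ := by
    rwa [← Measure.restrict_congr_set Ioo_ae_eq_Ico]
  have hIoc : (∫⁻ t in Ioc (-1 : ℝ) 0, (ENNReal.ofReal |t|) ^ (-δ)) < ∞ := by
    have hpre : (fun t : ℝ => -t) ⁻¹' (Ico (0 : ℝ) 1) = Ioc (-1 : ℝ) 0 := by
      ext t
      simp only [mem_preimage, mem_Ico, mem_Ioc]
      constructor
      · rintro ⟨a, b⟩; constructor <;> linarith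
      · rintro ⟨a, b⟩; constructor <;> linarith
    have hemb : MeasurableEmbedding (fun t : ℝ => -t) :=
      (Homeomorph.neg ℝ).measurableEmbedding
    have := (Measure.measurePreserving_neg (volume : Measure ℝ)).setLIntegral_comp_preimage_emb
      hemb (fun t => (ENNReal.ofReal |t|) ^ (-δ)) (Ico 0 1)
    rw [hpre] at this
    simp only [abs_neg] at this
    rwa [this]
  have hkint : (∫⁻ t, k t) < ∞ := by
    rw [hkdef]
    rw [lintegral_indicator measurableSet_Ioo]
    have hsub : Ioo (-1 : ℝ) 1 ⊆ Ioc (-1 : ℝ) 0 ∪ Ico (0 : ℝ) 1 := by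
      intro t ht
      rcases le_or_gt t 0 with h' | h'
      · exact Or.inl ⟨ht.1, h'⟩
      · exact Or.inr ⟨h'.le, ht.2⟩
    calc (∫⁻ t in Ioo (-1 : ℝ) 1, (ENNReal.ofReal |t|) ^ (-δ))
        ≤ ∫⁻ t in (Ioc (-1 : ℝ) 0 ∪ Ico (0 : ℝ) 1), (ENNReal.ofReal |t|) ^ (-δ) :=
          lintegral_mono_set hsub
      _ ≤ (∫⁻ t in Ioc (-1 : ℝ) 0, (ENNReal.ofReal |t|) ^ (-δ))
            + ∫⁻ t in Ico (0 : ℝ) 1, (ENNReal.ofReal |t|) ^ (-δ) :=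
          lintegral_union_le _ _ _
      _ < ∞ := ENNReal.add_lt_top.mpr ⟨hIoc, hIco⟩
  set Ck : ℝ≥0∞ := ∫⁻ t, k t with hCkdef
  -- translation invariance
  have htrans : ∀ x₁ : ℝ, (∫⁻ t, k (x₁ - t)) = Ck := by
    intro x₁
    have h1 : (∫⁻ t, k (x₁ - t)) = ∫⁻ t, k (x₁ + t) := by
      have := (Measure.measurePreserving_neg (volume : Measure ℝ)).lintegral_comp
        (f := fun t => k (x₁ + t)) (hkmeas.comp (measurable_const.add measurable_id))
      simpa [sub_eq_add_neg] using this
    rw [h1, lintegral_add_left_eq_self k x₁]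
  -- antitone envelopes
  set g1 : ℝ → ℝ≥0∞ := fun r => if r ≤ 2 then C else ENNReal.ofReal (h r) with hg1def
  have hg1anti : Antitone g1 := by
    intro a b hab
    dsimp only [g1]
    split_ifs with hb ha ha
    · exact le_refl _
    · exact absurd (le_trans hab hb) ha
    · exact hC b (by linarith [not_le.mp hb])
    · exact ENNReal.ofReal_le_ofReal
        (hmono (mem_Ioi.mpr (by linarith [not_le.mp ha])) (mem_Ioi.mpr (by linarith [not_le.mp hb])) hab)
  have hg1meas : Measurable g1 := hg1anti.measurable
  have hg1_ge : ∀ r : ℝ, 0 < r → ENNReal.ofReal (h r) ≤ g1 r := by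
    intro r hr; dsimp only [g1]; split_ifs with h'
    · exact hC r hr
    · exact le_refl _
  set g2 : ℝ → ℝ≥0∞ := fun r => if r ≤ 1 then C else ENNReal.ofReal (h (Real.sqrt 2 * r))
    with hg2def
  have hg2anti : Antitone g2 := by
    intro a b hab
    dsimp only [g2]
    have hs2 : (1 : ℝ) < Real.sqrt 2 := by
      rw [show (1:ℝ) = Real.sqrt 1 by simp]
      exact Real.sqrt_lt_sqrt (by norm_num) (by norm_num)
    split_ifs with hb ha ha
    · exact le_refl _
    · exact absurd (le_trans hab hb) ha
    · refine hC _ ?_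
      nlinarith [not_le.mp hb]
    · refine ENNReal.ofReal_le_ofReal (hmono ?_ ?_ ?_)
      · have := not_le.mp ha; exact mem_Ioi.mpr (by nlinarith)
      · have := not_le.mp hb; exact mem_Ioi.mpr (by nlinarith)
      · nlinarith [not_le.mp ha]
  have hg2meas : Measurable g2 := hg2anti.measurable
  -- S2 : integral of the outer tail envelope
  set S2 : ℝ≥0∞ :=
    ∫⁻ w : Euc m, {w : Euc m | 1 < ‖w‖}.indicator (fun w => g2 ‖w‖) w with hS2def
  have hSetOpen : MeasurableSet {w : Euc m | 1 < ‖w‖} :=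
    (isOpen_lt continuous_const continuous_norm).measurableSet
  have hS2meas : Measurable fun w : Euc m => {w : Euc m | 1 < ‖w‖}.indicator (fun w => g2 ‖w‖) w :=
    (hg2meas.comp measurable_norm).indicator hSetOpen
  -- S2 ≤ C1 via Fubini on the splitting
  have hS2leC1 : S2 ≤ C1 := by
    have hψ1 : Measurable fun t : ℝ => (Ioo (0 : ℝ) 1).indicator (fun _ => (1 : ℝ≥0∞)) t :=
      measurable_const.indicator measurableSet_Ioo
    have hprod :
        (∫⁻ p : ℝ × Euc m, (Ioo (0 : ℝ) 1).indicator (fun _ => (1 : ℝ≥0∞)) p.1 *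
          {w : Euc m | 1 < ‖w‖}.indicator (fun w => g2 ‖w‖) p.2) = S2 := by
      rw [Measure.volume_eq_prod, lintegral_prod_mul hψ1.aemeasurable hS2meas.aemeasurable]
      rw [lintegral_indicator measurableSet_Ioo, setLIntegral_const]
      simp [Real.volume_Ioo]; rfl
    have htr :
        (∫⁻ y : Euc (m + 1), (Ioo (0 : ℝ) 1).indicator (fun _ => (1 : ℝ≥0∞)) (eucSplit y).1 *
          {w : Euc m | 1 < ‖w‖}.indicator (fun w => g2 ‖w‖) (eucSplit y).2)
          = ∫⁻ p : ℝ × Euc m, (Ioo (0 : ℝ) 1).indicator (fun _ => (1 : ℝ≥0∞)) p.1 *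
          {w : Euc m | 1 < ‖w‖}.indicator (fun w => g2 ‖w‖) p.2 :=
      (eucSplit_measurePreserving m).lintegral_comp
        ((hψ1.comp measurable_fst).mul (hS2meas.comp measurable_snd))
    have hle : ∀ y : Euc (m + 1),
        (Ioo (0 : ℝ) 1).indicator (fun _ => (1 : ℝ≥0∞)) (eucSplit y).1 *
          {w : Euc m | 1 < ‖w‖}.indicator (fun w => g2 ‖w‖) (eucSplit y).2 ≤ F y := by
      intro y
      dsimp only [eucSplit]
      by_cases h1 : (y 0) ∈ Ioo (0 : ℝ) 1
      · by_cases h2 : eucTail y ∈ {w : Euc m | 1 < ‖w‖}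
        · rw [indicator_of_mem h1, indicator_of_mem h2, one_mul]
          have ht1 : (1 : ℝ) < ‖eucTail y‖ := h2
          have hyt : ‖y‖ ≤ Real.sqrt 2 * ‖eucTail y‖ := by
            have hsq : ‖y‖ ^ 2 ≤ (Real.sqrt 2 * ‖eucTail y‖) ^ 2 := by
              rw [mul_pow, Real.sq_sqrt (by norm_num : (0:ℝ) ≤ 2)]
              have := eucNormSq y
              have hy01 : (y 0) ^ 2 ≤ 1 := by nlinarith [h1.1, h1.2]
              nlinarith
            have h' := Real.sqrt_le_sqrt hsq
            rwa [Real.sqrt_sq (norm_nonneg y), Real.sqrt_sq (by positivity)] at h'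
          have hy0 : 0 < ‖y‖ := lt_of_lt_of_le (by linarith : (0:ℝ) < 1)
            (le_trans ht1.le (eucTail_norm_le y))
          dsimp only [g2]
          rw [if_neg (not_le.mpr ht1)]
          exact ENNReal.ofReal_le_ofReal
            (hmono (mem_Ioi.mpr hy0) (mem_Ioi.mpr (by nlinarith [Real.sqrt_nonneg 2])) hyt)
        · rw [indicator_of_notMem h2, mul_zero]; exact zero_le
      · rw [indicator_of_notMem h1, zero_mul]; exact zero_le
    calc S2 = ∫⁻ y : Euc (m + 1), (Ioo (0 : ℝ) 1).indicator (fun _ => (1 : ℝ≥0∞)) (eucSplit y).1 *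
          {w : Euc m | 1 < ‖w‖}.indicator (fun w => g2 ‖w‖) (eucSplit y).2 := by
          rw [htr, hprod]
      _ ≤ ∫⁻ y : Euc (m + 1), F y := lintegral_mono hle
      _ = C1 := rfl
  -- scaling: the tail part of ∫ g1∘norm is controlled by S2
  set φ : Euc m → ℝ≥0∞ := fun z => {z : Euc m | 2 < ‖z‖}.indicator (fun z => g1 ‖z‖) z with hφdef
  have hφmeas : Measurable φ :=
    (hg1meas.comp measurable_norm).indicator
      (isOpen_lt continuous_const continuous_norm).measurableSet
  have hs2pos : (0 : ℝ) < Real.sqrt 2 := Real.sqrt_pos.mpr (by norm_num)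
  have hA2 : (∫⁻ z : Euc m, φ z) ≤ ENNReal.ofReal ((Real.sqrt 2) ^ m) * S2 := by
    have hmap := Measure.map_addHaar_smul (volume : Measure (Euc m)) (ne_of_gt hs2pos)
    have hlm : (∫⁻ w : Euc m, φ (Real.sqrt 2 • w)) =
        ∫⁻ z, φ z ∂(Measure.map (Real.sqrt 2 • ·) (volume : Measure (Euc m))) :=
      (lintegral_map hφmeas (measurable_const_smul _)).symm
    rw [hmap, lintegral_smul_measure] at hlm
    -- hlm : ∫⁻ w, φ (√2 • w) = ofReal |(√2 ^ finrank)⁻¹| * ∫⁻ z, φ z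
    have hfr : Module.finrank ℝ (Euc m) = m := finrank_euclideanSpace_fin
    have hcc : ENNReal.ofReal ((Real.sqrt 2) ^ m) *
        ENNReal.ofReal |((Real.sqrt 2) ^ Module.finrank ℝ (Euc m))⁻¹| = 1 := by
      rw [hfr, abs_of_pos (by positivity), ← ENNReal.ofReal_mul (by positivity),
        mul_inv_cancel₀ (by positivity), ENNReal.ofReal_one]
    have key : (∫⁻ z : Euc m, φ z) =
        ENNReal.ofReal ((Real.sqrt 2) ^ m) * ∫⁻ w : Euc m, φ (Real.sqrt 2 • w) := by
      rw [hlm, smul_eq_mul, ← mul_assoc, hcc, one_mul]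
    rw [key]
    refine mul_le_mul_right (lintegral_mono fun w => ?_) _
    -- pointwise: φ (√2 • w) ≤ indicator {1<‖w‖} (g2 ‖w‖)
    dsimp only [φ]
    by_cases hw : 2 < ‖Real.sqrt 2 • w‖
    · rw [indicator_of_mem (show Real.sqrt 2 • w ∈ {z : Euc m | 2 < ‖z‖} from hw)]
      have hnorm : ‖Real.sqrt 2 • w‖ = Real.sqrt 2 * ‖w‖ := by
        rw [norm_smul, Real.norm_eq_abs, abs_of_pos hs2pos]
      have hw1 : 1 < ‖w‖ := by
        rw [hnorm] at hw
        nlinarith [Real.sq_sqrt (by norm_num : (0:ℝ) ≤ 2), norm_nonneg w, hs2pos]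
      rw [indicator_of_mem (show w ∈ {w : Euc m | 1 < ‖w‖} from hw1)]
      dsimp only [g1, g2]
      rw [if_neg (not_le.mpr hw), if_neg (not_le.mpr hw1), hnorm]
    · rw [indicator_of_notMem (show Real.sqrt 2 • w ∉ {z : Euc m | 2 < ‖z‖} from hw)]
      exact zero_le
  -- the full envelope integral
  have hCm : (∫⁻ z : Euc m, g1 ‖z‖) ≤
      C * volume (Metric.closedBall (0 : Euc m) 2) + ENNReal.ofReal ((Real.sqrt 2) ^ m) * S2 := by
    have hle : ∀ z : Euc m, g1 ‖z‖ ≤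
        (Metric.closedBall (0 : Euc m) 2).indicator (fun _ => C) z + φ z := by
      intro z
      by_cases hz : ‖z‖ ≤ 2
      · have hzmem : z ∈ Metric.closedBall (0 : Euc m) 2 := by
          rwa [Metric.mem_closedBall, dist_zero_right]
        rw [indicator_of_mem hzmem]
        dsimp only [g1]
        rw [if_pos hz]
        exact le_add_right (le_refl _)
      · have : φ z = g1 ‖z‖ := indicator_of_mem (show z ∈ {z : Euc m | 2 < ‖z‖} from not_le.mp hz) _
        rw [← this]
        exact le_add_left (le_refl _)
    calc (∫⁻ z : Euc m, g1 ‖z‖)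
        ≤ ∫⁻ z : Euc m, ((Metric.closedBall (0 : Euc m) 2).indicator (fun _ => C) z + φ z) :=
          lintegral_mono hle
      _ = (∫⁻ z : Euc m, (Metric.closedBall (0 : Euc m) 2).indicator (fun _ => C) z)
            + ∫⁻ z : Euc m, φ z :=
          lintegral_add_left' (measurable_const.indicator Metric.isClosed_closedBall.measurableSet).aemeasurable _
      _ ≤ C * volume (Metric.closedBall (0 : Euc m) 2) + ENNReal.ofReal ((Real.sqrt 2) ^ m) * S2 := by
          refine add_le_add (le_of_eq ?_) hA2
          rw [lintegral_indicator Metric.isClosed_closedBall.measurableSet, setLIntegral_const]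
  -- total bound
  set T : ℝ≥0∞ := C1 + Ck * (C * volume (Metric.closedBall (0 : Euc m) 2)
    + ENNReal.ofReal ((Real.sqrt 2) ^ m) * S2) with hTdef
  have hTfin : T ≠ ∞ := by
    refine ENNReal.add_ne_top.mpr ⟨hC1fin.ne, ENNReal.mul_ne_top hkint.ne ?_⟩
    refine ENNReal.add_ne_top.mpr ⟨ENNReal.mul_ne_top hCfin.ne
      (measure_closedBall_lt_top).ne, ENNReal.mul_ne_top ENNReal.ofReal_ne_top ?_⟩
    exact (lt_of_le_of_lt hS2leC1 hC1fin).ne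
  refine ⟨T.toReal, fun x₁ => ?_⟩
  rw [ENNReal.ofReal_toReal hTfin]
  -- main chain
  have step1 : (∫⁻ y : Euc (m + 1), F y * (ENNReal.ofReal |x₁ - y 0|) ^ (-δ))
      ≤ ∫⁻ y : Euc (m + 1), (F y + F y * k (x₁ - y 0)) := by
    refine lintegral_mono fun y => ?_
    have hK : (ENNReal.ofReal |x₁ - y 0|) ^ (-δ) ≤ 1 + k (x₁ - y 0) := by
      by_cases hmem : (x₁ - y 0) ∈ Ioo (-1 : ℝ) 1
      · rw [hkdef]; dsimp only; rw [indicator_of_mem hmem]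
        exact le_add_self
      · rw [hkdef]; dsimp only; rw [indicator_of_notMem hmem, add_zero]
        have h1le : (1 : ℝ) ≤ |x₁ - y 0| := by
          by_contra hcon
          push_neg at hcon
          exact hmem (mem_Ioo.mpr (abs_lt.mp hcon))
        have hge1 : (1 : ℝ≥0∞) ≤ ENNReal.ofReal |x₁ - y 0| := by
          rw [← ENNReal.ofReal_one]; exact ENNReal.ofReal_le_ofReal h1le
        calc (ENNReal.ofReal |x₁ - y 0|) ^ (-δ)
            ≤ (ENNReal.ofReal |x₁ - y 0|) ^ (0 : ℝ) :=
              ENNReal.rpow_le_rpow_of_exponent_le hge1 (by linarith)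
          _ = 1 := ENNReal.rpow_zero
    calc F y * (ENNReal.ofReal |x₁ - y 0|) ^ (-δ) ≤ F y * (1 + k (x₁ - y 0)) :=
          mul_le_mul_right hK _
      _ = F y + F y * k (x₁ - y 0) := by rw [mul_add, mul_one]
  have step2 : (∫⁻ y : Euc (m + 1), (F y + F y * k (x₁ - y 0)))
      = C1 + ∫⁻ y : Euc (m + 1), F y * k (x₁ - y 0) :=
    lintegral_add_left' hFaem _
  have step3 : (∫⁻ y : Euc (m + 1), F y * k (x₁ - y 0))
      ≤ ∫⁻ y : Euc (m + 1), g1 ‖(eucSplit y).2‖ * k (x₁ - (eucSplit y).1) := by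
    refine lintegral_mono_ae ?_
    have h0 : ∀ᵐ y : Euc (m + 1) ∂volume, y ≠ 0 := by
      rw [ae_iff]
      simpa [not_not, Set.setOf_eq_eq_singleton] using measure_singleton (0 : Euc (m + 1))
    filter_upwards [h0] with y hy
    have hy0 : 0 < ‖y‖ := norm_pos_iff.mpr hy
    refine mul_le_mul_left ?_ _
    dsimp only [eucSplit]
    -- F y ≤ g1 ‖eucTail y‖
    dsimp only [g1]
    split_ifs with ht
    · exact hC _ hy0
    · exact ENNReal.ofReal_le_ofReal
        (hmono (mem_Ioi.mpr (by linarith [not_le.mp ht] : (0:ℝ) < ‖eucTail y‖))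
          (mem_Ioi.mpr hy0) (eucTail_norm_le y))
  have hG : Measurable (fun p : ℝ × Euc m => g1 ‖p.2‖ * k (x₁ - p.1)) :=
    Measurable.mul (hg1meas.comp (measurable_norm.comp measurable_snd))
      (hkmeas.comp (measurable_const.sub measurable_fst))
  have step4 : (∫⁻ y : Euc (m + 1), g1 ‖(eucSplit y).2‖ * k (x₁ - (eucSplit y).1))
      = ∫⁻ p : ℝ × Euc m, g1 ‖p.2‖ * k (x₁ - p.1) :=
    (eucSplit_measurePreserving m).lintegral_comp hG
  have step5 : (∫⁻ p : ℝ × Euc m, g1 ‖p.2‖ * k (x₁ - p.1))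
      = Ck * ∫⁻ z : Euc m, g1 ‖z‖ := by
    have hre : (fun p : ℝ × Euc m => g1 ‖p.2‖ * k (x₁ - p.1))
        = fun p : ℝ × Euc m => (fun t => k (x₁ - t)) p.1 * (fun z => g1 ‖z‖) p.2 := by
      funext p; exact mul_comm _ _
    have hf : AEMeasurable (fun t : ℝ => k (x₁ - t)) volume :=
      (hkmeas.comp (measurable_const.sub measurable_id)).aemeasurable
    have hg : AEMeasurable (fun z : Euc m => g1 ‖z‖) volume :=
      (hg1meas.comp measurable_norm).aemeasurable
    rw [hre, Measure.volume_eq_prod, lintegral_prod_mul hf hg, htrans x₁]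
  calc (∫⁻ y : Euc (m + 1), ENNReal.ofReal (h ‖y‖) * (ENNReal.ofReal |x₁ - y 0|) ^ (-δ))
      ≤ ∫⁻ y : Euc (m + 1), (F y + F y * k (x₁ - y 0)) := step1
    _ = C1 + ∫⁻ y : Euc (m + 1), F y * k (x₁ - y 0) := step2
    _ ≤ C1 + ∫⁻ y : Euc (m + 1), g1 ‖(eucSplit y).2‖ * k (x₁ - (eucSplit y).1) :=
        add_le_add_right step3 _
    _ = C1 + Ck * ∫⁻ z : Euc m, g1 ‖z‖ := by rw [step4, step5]
    _ ≤ T := add_le_add_right (mul_le_mul_right hCm _) _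
end
end
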